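/- For all f ∈ C([0,1]) and all t > 0: ω_1(f, t) ≤ (2 + 4(n³ + n²) t) ‖K_n f − f‖_∞; in particular, (1/6) ω_1(f, 1/(n³+n²)) ≤ ‖K_n f − f‖_∞. -/

import Mathlib

/-!
Write `E = ‖K_n f - f‖` and `W = ω₁(f, 1/(n+1))`. `K_n f` is the polynomial
`(n+1) ∑ a_k b_{n,k}` with `a_k` the integral of `f` over `[k/(n+1), (k+1)/(n+1)]`, and its
derivative is `n(n+1) ∑ (a_{j+1} - a_j) b_{n-1,j}`. Since `|a_{j+1} - a_j| ≤ W/(n+1)` and the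
Bernstein basis is a partition of unity on `[0,1]`, `K_n f` is `nW`-Lipschitz there, and
comparing `f` with `K_n f` at both ends of an increment gives `ω₁(f,t) ≤ 2E + nWt`. At
`t = 1/(n+1)` this reads `W ≤ 2E + nW/(n+1)`, i.e. `W ≤ 2(n+1)E`; substituting back,
`ω₁(f,t) ≤ (2 + 2(n²+n)t)E`.
-/

noncomputable section

/-- The Kantorovič operator of order `n`. -/
def kantorovichOp (n : ℕ) (f : ℝ → ℝ) (x : ℝ) : ℝ :=
  (n + 1 : ℝ) * ∑ k ∈ Finset.range (n + 1), (n.choose k : ℝ) * x ^ k * (1 - x) ^ (n - k) *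
    ∫ u in ((k : ℝ) / (n + 1))..((k + 1 : ℝ) / (n + 1)), f u

/-- The sup norm of `g` on `[0,1]`. -/
def supNorm (g : ℝ → ℝ) : ℝ :=
  sSup ((fun x => |g x|) '' Set.Icc (0 : ℝ) 1)

/-- The first modulus of continuity of `f` on `[0,1]` in the sup norm. -/
def omega1 (f : ℝ → ℝ) (t : ℝ) : ℝ :=
  sSup {v : ℝ | ∃ x h : ℝ, 0 < h ∧ h ≤ t ∧ 0 ≤ x ∧ x + h ≤ 1 ∧ v = |f (x + h) - f x|}

open Polynomial Finset Set MeasureTheory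

namespace bernsteinPolynomial

theorem derivative_sum_smul {R : Type*} [CommRing R] (n : ℕ) (c : ℕ → R) :
    derivative (∑ k ∈ range (n + 1), c k • bernsteinPolynomial R n k) =
      (n : R[X]) * ∑ j ∈ range n, (c (j + 1) - c j) • bernsteinPolynomial R (n - 1) j := by
  cases n with
  | zero => simp [bernsteinPolynomial]
  | succ m =>
    have hshift : ∑ j ∈ range (m + 1), C (c (j + 1)) * bernsteinPolynomial R m (j + 1) +
        C (c 0) * bernsteinPolynomial R m 0 =
          ∑ j ∈ range (m + 1), C (c j) * bernsteinPolynomial R m j := by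
      rw [← sum_range_succ' (fun j => C (c j) * bernsteinPolynomial R m j), sum_range_succ,
        eq_zero_of_lt R (lt_add_one m), mul_zero, add_zero]
    rw [sum_range_succ', derivative_add, derivative_sum]
    simp only [smul_eq_C_mul, derivative_C_mul, derivative_succ, derivative_zero,
      add_tsub_cancel_right, mul_left_comm (C _), ← mul_sum, C_sub, sub_mul, mul_sub,
      sum_sub_distrib]
    linear_combination -(↑(m + 1) : R[X]) * hshift

theorem eval_nonneg {n ν : ℕ} {x : ℝ} (hx : x ∈ Icc (0 : ℝ) 1) :
    0 ≤ (bernsteinPolynomial ℝ n ν).eval x :=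
  bernstein_nonneg (x := ⟨x, hx⟩)

theorem abs_eval_sum_smul_le {n : ℕ} {c : ℕ → ℝ} {M x : ℝ} (hx : x ∈ Icc (0 : ℝ) 1)
    (hc : ∀ k ∈ range (n + 1), |c k| ≤ M) :
    |(∑ k ∈ range (n + 1), c k • bernsteinPolynomial ℝ n k).eval x| ≤ M := by
  rw [eval_finsetSum]
  calc |∑ k ∈ range (n + 1), (c k • bernsteinPolynomial ℝ n k).eval x|
      ≤ ∑ k ∈ range (n + 1), |c k| * (bernsteinPolynomial ℝ n k).eval x := by
        refine (abs_sum_le_sum_abs _ _).trans (sum_le_sum fun k _ => ?_)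
        rw [eval_smul, smul_eq_mul, abs_mul, abs_of_nonneg (eval_nonneg hx)]
    _ ≤ ∑ k ∈ range (n + 1), M * (bernsteinPolynomial ℝ n k).eval x :=
        sum_le_sum fun k hk => mul_le_mul_of_nonneg_right (hc k hk) (eval_nonneg hx)
    _ = M := by rw [← mul_sum, ← eval_finsetSum, bernsteinPolynomial.sum, eval_one, mul_one]

end bernsteinPolynomial

theorem omega1_nonneg (f : ℝ → ℝ) (t : ℝ) : 0 ≤ omega1 f t :=
  Real.sSup_nonneg <| by rintro _ ⟨x, h, -, -, -, -, rfl⟩; exact abs_nonneg _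

theorem omega1_le {f : ℝ → ℝ} {t C : ℝ} (hC : 0 ≤ C)
    (h : ∀ x h, 0 < h → h ≤ t → 0 ≤ x → x + h ≤ 1 → |f (x + h) - f x| ≤ C) :
    omega1 f t ≤ C :=
  Real.sSup_le (by rintro _ ⟨x, δ, hδ, hδt, hx, hxδ, rfl⟩; exact h x δ hδ hδt hx hxδ) hC

theorem abs_sub_le_omega1 {f : ℝ → ℝ} (hf : ContinuousOn f (Icc 0 1)) {x h t : ℝ}
    (hh : 0 < h) (hht : h ≤ t) (hx : 0 ≤ x) (hxh : x + h ≤ 1) :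
    |f (x + h) - f x| ≤ omega1 f t := by
  refine le_csSup ?_ ⟨x, h, hh, hht, hx, hxh, rfl⟩
  obtain ⟨M, hM⟩ := isCompact_Icc.exists_bound_of_continuousOn hf
  refine ⟨M + M, ?_⟩
  rintro _ ⟨y, δ, hδ, -, hy, hyδ, rfl⟩
  have h₁ := hM (y + δ) ⟨by linarith, hyδ⟩
  have h₂ := hM y ⟨hy, by linarith⟩
  rw [Real.norm_eq_abs] at h₁ h₂
  exact (abs_sub _ _).trans (add_le_add h₁ h₂)

theorem supNorm_nonneg (g : ℝ → ℝ) : 0 ≤ supNorm g :=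
  Real.sSup_nonneg <| by rintro _ ⟨x, -, rfl⟩; exact abs_nonneg _

theorem abs_le_supNorm {g : ℝ → ℝ} (hg : ContinuousOn g (Icc 0 1)) {x : ℝ}
    (hx : x ∈ Icc (0 : ℝ) 1) : |g x| ≤ supNorm g :=
  le_csSup (isCompact_Icc.bddAbove_image hg.abs) ⟨x, hx, rfl⟩

theorem omega1_le_two_mul_supNorm_add {f g : ℝ → ℝ} (hf : ContinuousOn f (Icc 0 1))
    (hg : ContinuousOn g (Icc 0 1)) {L t : ℝ} (hL : 0 ≤ L)
    (hgL : ∀ x ∈ Icc (0 : ℝ) 1, ∀ y ∈ Icc (0 : ℝ) 1, |g y - g x| ≤ L * |y - x|)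
    (ht : 0 ≤ t) :
    omega1 f t ≤ 2 * supNorm (fun x => g x - f x) + L * t := by
  have hgf : ContinuousOn (fun x => g x - f x) (Icc 0 1) := hg.sub hf
  refine omega1_le (by positivity [supNorm_nonneg (fun x => g x - f x)]) fun x h hh hht hx hxh => ?_
  have hxI : x ∈ Icc (0 : ℝ) 1 := ⟨hx, by linarith⟩
  have hxhI : x + h ∈ Icc (0 : ℝ) 1 := ⟨by linarith, hxh⟩
  have hE₁ := abs_le_supNorm hgf hxI
  have hE₂ := abs_le_supNorm hgf hxhI
  have hLip : |g (x + h) - g x| ≤ L * t := by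
    calc |g (x + h) - g x| ≤ L * |x + h - x| := hgL x hxI (x + h) hxhI
      _ ≤ L * t := by rw [add_sub_cancel_left, abs_of_pos hh]; gcongr
  calc |f (x + h) - f x|
      = |-(g (x + h) - f (x + h)) + (g (x + h) - g x) + (g x - f x)| := by ring_nf
    _ ≤ |g (x + h) - f (x + h)| + |g (x + h) - g x| + |g x - f x| := by
        simpa only [abs_neg] using abs_add_three (-(g (x + h) - f (x + h))) _ _
    _ ≤ 2 * supNorm (fun x => g x - f x) + L * t := by linarith

theorem abs_integral_shift_sub_le_omega1 {f : ℝ → ℝ} (hf : ContinuousOn f (Icc 0 1))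
    {a δ : ℝ} (ha : 0 ≤ a) (hδ : 0 < δ) (haδ : a + 2 * δ ≤ 1) :
    |(∫ u in (a + δ)..(a + 2 * δ), f u) - ∫ u in a..(a + δ), f u| ≤ omega1 f δ * δ := by
  have hsub : uIcc a (a + δ) ⊆ Icc 0 1 := by
    rw [Set.uIcc_of_le (by linarith)]; exact Icc_subset_Icc ha (by linarith)
  have hshift : ∫ u in (a + δ)..(a + 2 * δ), f u = ∫ u in a..(a + δ), f (u + δ) := by
    rw [intervalIntegral.integral_comp_add_right]; ring_nf
  have hint : IntervalIntegrable f volume a (a + δ) := (hf.mono hsub).intervalIntegrable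
  have hint' : IntervalIntegrable (fun u => f (u + δ)) volume a (a + δ) := by
    refine ContinuousOn.intervalIntegrable
      (hf.comp (continuousOn_id.add continuousOn_const) fun u hu => ?_)
    rw [Set.uIcc_of_le (by linarith)] at hu
    exact ⟨by linarith [hu.1], by linarith [hu.2]⟩
  rw [hshift, ← intervalIntegral.integral_sub hint' hint]
  calc ‖∫ u in a..(a + δ), f (u + δ) - f u‖
      ≤ omega1 f δ * |a + δ - a| := intervalIntegral.norm_integral_le_of_norm_le_const
        fun u hu => by
          rw [Set.uIoc_of_le (by linarith)] at hu
          exact abs_sub_le_omega1 (x := u) hf hδ le_rfl (by linarith [hu.1]) (by linarith [hu.2])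
    _ = omega1 f δ * δ := by rw [add_sub_cancel_left, abs_of_pos hδ]

def kantorovichCoeff (n : ℕ) (f : ℝ → ℝ) (k : ℕ) : ℝ :=
  ∫ u in ((k : ℝ) / (n + 1))..((k + 1 : ℝ) / (n + 1)), f u

def kantorovichPoly (n : ℕ) (f : ℝ → ℝ) : ℝ[X] :=
  ((n : ℝ) + 1) •
    ∑ k ∈ range (n + 1), kantorovichCoeff n f k • bernsteinPolynomial ℝ n k

theorem kantorovichOp_eq_eval (n : ℕ) (f : ℝ → ℝ) (x : ℝ) :
    kantorovichOp n f x = (kantorovichPoly n f).eval x := by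
  simp [kantorovichOp, kantorovichPoly, kantorovichCoeff, eval_finsetSum, bernsteinPolynomial,
    mul_comm]

theorem abs_kantorovichCoeff_succ_sub_le {n : ℕ} {f : ℝ → ℝ} (hf : ContinuousOn f (Icc 0 1))
    {j : ℕ} (hj : j < n) :
    |kantorovichCoeff n f (j + 1) - kantorovichCoeff n f j| ≤
      omega1 f (1 / (n + 1)) * (1 / (n + 1)) := by
  have hN : (0 : ℝ) < n + 1 := by positivity
  have hjn : (j : ℝ) + 2 ≤ n + 1 := by exact_mod_cast (show j + 2 ≤ n + 1 by omega)
  have hend : (j : ℝ) / (n + 1) + 2 * (1 / (n + 1)) ≤ 1 := by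
    rw [← sub_nonneg]
    field_simp
    linarith
  have key := abs_integral_shift_sub_le_omega1 hf (by positivity) (by positivity) hend
  convert key using 4 <;> simp only [kantorovichCoeff] <;> push_cast <;> ring_nf

theorem abs_eval_derivative_kantorovichPoly_le {n : ℕ} {f : ℝ → ℝ}
    (hf : ContinuousOn f (Icc 0 1)) {x : ℝ} (hx : x ∈ Icc (0 : ℝ) 1) :
    |(derivative (kantorovichPoly n f)).eval x| ≤ n * omega1 f (1 / (n + 1)) := by
  rw [kantorovichPoly, derivative_smul, bernsteinPolynomial.derivative_sum_smul, eval_smul,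
    eval_mul, eval_natCast, smul_eq_mul]
  cases n with
  | zero => simp
  | succ m =>
    have hN : (0 : ℝ) < (m + 1 : ℕ) + 1 := by positivity
    have hsum := bernsteinPolynomial.abs_eval_sum_smul_le (n := m) hx fun j hj =>
      abs_kantorovichCoeff_succ_sub_le hf (mem_range.mp hj)
    rw [abs_mul, abs_mul, abs_of_pos hN, Nat.abs_cast, Nat.add_sub_cancel]
    calc ((m + 1 : ℕ) + 1 : ℝ) * ((m + 1 : ℕ) * |_|)
        ≤ ((m + 1 : ℕ) + 1 : ℝ) * ((m + 1 : ℕ) *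
          (omega1 f (1 / ((m + 1 : ℕ) + 1)) * (1 / ((m + 1 : ℕ) + 1)))) := by gcongr
      _ = _ := by field_simp

theorem abs_kantorovichOp_sub_le {n : ℕ} {f : ℝ → ℝ} (hf : ContinuousOn f (Icc 0 1))
    {x y : ℝ} (hx : x ∈ Icc (0 : ℝ) 1) (hy : y ∈ Icc (0 : ℝ) 1) :
    |kantorovichOp n f y - kantorovichOp n f x| ≤ n * omega1 f (1 / (n + 1)) * |y - x| := by
  simp only [kantorovichOp_eq_eval]
  exact Convex.norm_image_sub_le_of_norm_hasDerivWithin_le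
    (fun z _ => ((kantorovichPoly n f).hasDerivAt z).hasDerivWithinAt)
    (fun z hz => abs_eval_derivative_kantorovichPoly_le hf hz) (convex_Icc 0 1) hx hy

theorem omega1_le_two_mul_supNorm_kantorovichOp_sub_add (n : ℕ) {f : ℝ → ℝ}
    (hf : ContinuousOn f (Icc 0 1)) {t : ℝ} (ht : 0 ≤ t) :
    omega1 f t ≤ 2 * supNorm (fun x => kantorovichOp n f x - f x) +
      n * omega1 f (1 / (n + 1)) * t := by
  have hK : ContinuousOn (kantorovichOp n f) (Icc 0 1) :=
    (kantorovichPoly n f).continuousOn.congr fun x _ => kantorovichOp_eq_eval n f x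
  exact omega1_le_two_mul_supNorm_add hf hK (by positivity [omega1_nonneg f (1 / (n + 1))])
    (fun x hx y hy => abs_kantorovichOp_sub_le hf hx hy) ht

theorem omega1_inv_succ_le_supNorm_kantorovichOp_sub (n : ℕ) {f : ℝ → ℝ}
    (hf : ContinuousOn f (Icc 0 1)) :
    omega1 f (1 / (n + 1)) ≤ 2 * (n + 1) * supNorm (fun x => kantorovichOp n f x - f x) := by
  set E := supNorm (fun x => kantorovichOp n f x - f x)
  set W := omega1 f (1 / (n + 1))
  have h : W ≤ 2 * E + n * W * (1 / (n + 1)) :=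
    omega1_le_two_mul_supNorm_kantorovichOp_sub_add n hf (by positivity)
  have h' : (n + 1) * W ≤ (n + 1) * (2 * E) + n * W := by
    calc (n + 1) * W ≤ (n + 1) * (2 * E + n * W * (1 / (n + 1))) := by gcongr
      _ = (n + 1) * (2 * E) + n * W := by field_simp
  linarith

theorem omega1_le_mul_supNorm_kantorovichOp_sub (n : ℕ) {f : ℝ → ℝ}
    (hf : ContinuousOn f (Icc 0 1)) {t : ℝ} (ht : 0 ≤ t) :
    omega1 f t ≤ (2 + 2 * (n ^ 2 + n) * t) * supNorm (fun x => kantorovichOp n f x - f x) := by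
  set E := supNorm (fun x => kantorovichOp n f x - f x)
  calc omega1 f t ≤ 2 * E + n * omega1 f (1 / (n + 1)) * t :=
        omega1_le_two_mul_supNorm_kantorovichOp_sub_add n hf ht
    _ ≤ 2 * E + n * (2 * (n + 1) * E) * t := by
        gcongr; exact omega1_inv_succ_le_supNorm_kantorovichOp_sub n hf
    _ = (2 + 2 * (n ^ 2 + n) * t) * E := by ring

theorem kantorovich_lower_estimate_general (n : ℕ) (f : ℝ → ℝ) (hf : Continuous f)
    (t : ℝ) (ht : 0 < t) :
    omega1 f t ≤ (2 + 4 * ((n : ℝ) ^ 3 + (n : ℝ) ^ 2) * t) *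
        supNorm (fun x => kantorovichOp n f x - f x) ∧
      (1 / 6) * omega1 f (1 / ((n : ℝ) ^ 3 + (n : ℝ) ^ 2)) ≤
        supNorm (fun x => kantorovichOp n f x - f x) := by
  set s := (n : ℝ) ^ 3 + (n : ℝ) ^ 2
  set E := supNorm (fun x => kantorovichOp n f x - f x)
  have hs : (n : ℝ) ^ 2 + n ≤ 2 * s := by
    have : (n : ℝ) ≤ n ^ 2 := by exact_mod_cast Nat.le_self_pow two_ne_zero n
    nlinarith [pow_nonneg (Nat.cast_nonneg (α := ℝ) n) 3]
  have hbound : ∀ τ : ℝ, 0 ≤ τ → omega1 f τ ≤ (2 + 4 * s * τ) * E := fun τ hτ =>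
    (omega1_le_mul_supNorm_kantorovichOp_sub n hf.continuousOn hτ).trans <|
      mul_le_mul_of_nonneg_right (by nlinarith) (supNorm_nonneg _)
  refine ⟨hbound t ht.le, ?_⟩
  -- `s = 0` for `n = 0`, and then `1 / s = 0`.
  have hs1 : 4 * s * (1 / s) ≤ 4 := by
    rw [mul_assoc, mul_one_div]
    exact mul_le_of_le_one_right (by norm_num) (div_self_le_one s)
  have := hbound (1 / s) (by positivity)
  have := mul_le_mul_of_nonneg_right hs1 (supNorm_nonneg (fun x => kantorovichOp n f x - f x))
  linarith

/-- **Lower estimate for the Kantorovič operator.**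
For all `f ∈ C([0,1])` and `t > 0`:
`ω₁(f,t) ≤ (2 + 4 (n³ + n²) t) ‖K_n f − f‖_∞`; in particular
`(1/6) ω₁(f, 1/(n³+n²)) ≤ ‖K_n f − f‖_∞`. -/
theorem kantorovich_lower_estimate (n : ℕ) (hn : 2 ≤ n) (f : ℝ → ℝ) (hf : Continuous f)
    (t : ℝ) (ht : 0 < t) :
    omega1 f t ≤ (2 + 4 * ((n : ℝ) ^ 3 + (n : ℝ) ^ 2) * t) *
        supNorm (fun x => kantorovichOp n f x - f x) ∧
      (1 / 6) * omega1 f (1 / ((n : ℝ) ^ 3 + (n : ℝ) ^ 2)) ≤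
        supNorm (fun x => kantorovichOp n f x - f x) :=
  kantorovich_lower_estimate_general n f hf t ht
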